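/- For x > 0, the loan market S_x is arbitrage-free: if γ = α − β with α, β ∈ S_x and γ(0) = 0, then either γ = 0 or there exists k ≥ 1 with γ(k) < 0. In particular the linear span of S_x contains no arbitrage. -/

import Mathlib

/-- The elementary loan `-1 + (1+mx)·yᵐ` of maturity `m`, simple interest rate `x`. -/
noncomputable def elemLoan (x : ℝ) (m : ℕ) : Polynomial ℝ :=
  Polynomial.C (1 + m * x) * Polynomial.X ^ m - 1

/-- The convex cone generated by the elementary loans of simple interest rate `x`:
the set of conical combinations of the `elemLoan x m`, `m ≥ 1`. -/
noncomputable def Sx (x : ℝ) : Set (Polynomial ℝ) :=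
  {α | ∃ (n : ℕ) (c : Fin n → ℝ) (m : Fin n → ℕ), 0 < n ∧ (∀ k, 0 < c k) ∧ (∀ k, 1 ≤ m k) ∧
    α = ∑ k, c k • elemLoan x (m k)}

/-- An arbitrage: a nonzero transaction with zero payment at time 0 and positive net gain. -/
def IsArbitrage (β : Polynomial ℝ) : Prop :=
  β ≠ 0 ∧ β.coeff 0 = 0 ∧ (∀ k ≥ 1, 0 ≤ β.coeff k) ∧
    0 < ∑ k ∈ Finset.Icc 1 β.natDegree, β.coeff k

/-!
Discount a payment due at time `k` by the simple-interest factor `1 + k x`. The resulting linear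
present-value functional prices every elementary loan at zero, so it vanishes on the span of `Sx x`.
But for `x ≥ 0` all discount factors are positive, so it is strictly positive on every nonzero
polynomial with nonnegative coefficients; hence such a polynomial never lies in the span.
-/

open Polynomial

theorem Polynomial.sum_mul_pos {R : Type*} [Semiring R] [PartialOrder R] [IsStrictOrderedRing R]
    {p : R[X]} {w : ℕ → R} (hw : ∀ k, 0 < w k) (hp : ∀ k, 0 ≤ p.coeff k) (hne : p ≠ 0) :
    0 < p.sum fun k a => w k * a := by
  refine Finset.sum_pos (fun k hk => mul_pos (hw k) ?_) (nonempty_support_iff.mpr hne)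
  exact (hp k).lt_of_ne' (mem_support_iff.mp hk)

noncomputable def presentValue (x : ℝ) : ℝ[X] →ₗ[ℝ] ℝ :=
  lsum fun k => (1 + k * x)⁻¹ • LinearMap.id

theorem presentValue_apply (x : ℝ) (p : ℝ[X]) :
    presentValue x p = p.sum fun k a => (1 + k * x)⁻¹ * a :=
  rfl

theorem elemLoan_eq_monomial_sub (x : ℝ) (m : ℕ) :
    elemLoan x m = monomial m (1 + m * x) - monomial 0 1 := by
  rw [elemLoan, C_mul_X_pow_eq_monomial, monomial_zero_one]

theorem presentValue_elemLoan {x : ℝ} {m : ℕ} (hm : 1 + m * x ≠ 0) :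
    presentValue x (elemLoan x m) = 0 := by
  rw [elemLoan_eq_monomial_sub, map_sub, presentValue_apply, presentValue_apply,
    sum_monomial_index _ _ (by simp), sum_monomial_index _ _ (by simp)]
  simp [hm]

theorem span_Sx_le_ker_presentValue {x : ℝ} (hx : 0 ≤ x) :
    Submodule.span ℝ (Sx x) ≤ LinearMap.ker (presentValue x) := by
  rw [Submodule.span_le]
  rintro _ ⟨n, c, m, -, -, -, rfl⟩
  refine Submodule.sum_mem _ fun k _ => Submodule.smul_mem _ _ ?_
  exact presentValue_elemLoan (by positivity)

theorem eq_zero_of_mem_span_Sx_of_coeff_nonneg {x : ℝ} (hx : 0 ≤ x) {γ : ℝ[X]}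
    (hγ : γ ∈ Submodule.span ℝ (Sx x)) (hγ_nonneg : ∀ k, 0 ≤ γ.coeff k) : γ = 0 := by
  by_contra hne
  have hpos : 0 < presentValue x γ :=
    sum_mul_pos (fun k => by positivity) hγ_nonneg hne
  exact hpos.ne' (span_Sx_le_ker_presentValue hx hγ)

theorem Polynomial.coeff_nonneg_of_coeff_zero {R : Type*} [Semiring R] [Preorder R] {p : R[X]}
    (h0 : p.coeff 0 = 0) (hpos : ∀ k ≥ 1, 0 ≤ p.coeff k) (k : ℕ) : 0 ≤ p.coeff k := by
  rcases k.eq_zero_or_pos with rfl | hk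
  · exact h0.ge
  · exact hpos k hk

theorem sx_arbitrage_free (x : ℝ) (hx : 0 < x) :
    (∀ α ∈ Sx x, ∀ β ∈ Sx x, (α - β).coeff 0 = 0 →
      (α - β = 0 ∨ ∃ k ≥ 1, (α - β).coeff k < 0)) ∧
    (∀ γ ∈ Submodule.span ℝ (Sx x), ¬ IsArbitrage γ) := by
  constructor
  · intro α hα β hβ h0
    refine or_iff_not_imp_right.mpr fun hneg => ?_
    push Not at hneg
    exact eq_zero_of_mem_span_Sx_of_coeff_nonneg hx.le
      (sub_mem (Submodule.subset_span hα) (Submodule.subset_span hβ))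
      (coeff_nonneg_of_coeff_zero h0 hneg)
  · rintro γ hγ ⟨hne, h0, hpos, -⟩
    exact hne <|
      eq_zero_of_mem_span_Sx_of_coeff_nonneg hx.le hγ (coeff_nonneg_of_coeff_zero h0 hpos)
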